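/- Suppose τ ∧ τ' < ∞ holds P_x-almost surely for every x ∈ X. If ψ: X→[0,1] is Borel measurable with ψ = 1 on O, ψ = 0 on X∖K, and ψ(x) = ∫_K ψ(y) κ(x, dy) for every x ∈ K∖O, then ψ(x) = h(x) for every x ∈ X. -/

import Mathlib

open MeasureTheory ProbabilityTheory Set
open scoped ENNReal

/-- First hitting time of the set `S` by the sequence `ω`, valued in `ℕ∞` (`⊤` if never hit). -/
noncomputable def hitTime {X : Type*} (S : Set X) (ω : ℕ → X) : ℕ∞ :=
  sInf ((fun t : ℕ => (t : ℕ∞)) '' {t : ℕ | ω t ∈ S})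

/-- `P x` is the law on `X^ℕ` of the canonical Markov chain started at `x` with one-step
transition kernel `κ` (the Ionescu–Tulcea measure): each `P x` is a probability measure giving
full measure to paths starting at `x`, and conditionally on the first `n + 1` coordinates the
`(n+1)`-st coordinate has law `κ (ω n)`. -/
def IsMarkovChainLaw {X : Type*} [MeasurableSpace X] (κ : X → Measure X)
    (P : X → Measure (ℕ → X)) : Prop :=
  (∀ x, IsProbabilityMeasure (P x)) ∧
  (∀ x, P x {ω | ω 0 = x} = 1) ∧
  (∀ x (n : ℕ) (E : Set (ℕ → X)),
    MeasurableSet[MeasurableSpace.comap (fun (ω : ℕ → X) (i : Fin (n + 1)) => ω (i : ℕ))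
      inferInstance] E →
    ∀ f : X → ℝ≥0∞, Measurable f →
      ∫⁻ ω in E, f (ω (n + 1)) ∂(P x) = ∫⁻ ω in E, ∫⁻ y, f y ∂(κ (ω n)) ∂(P x))

/-!
Harmonicity of `ψ` on `K \ O` makes `ψ (x_n)`, integrated over the paths that have stayed in
`K \ O` before time `n`, equal to the mass entering `O` at time `n` plus the same integral at time
`n + 1`. Iterating, `ψ x` is the probability of entering `O` before time `n` without leaving `K`,
plus a remainder bounded by the probability of staying in `K \ O` up to time `n`; this tends to
`0` because the chain leaves `K \ O` almost surely.
-/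

open scoped Topology

section HitTime

variable {X : Type*} {S : Set X} {ω : ℕ → X}

lemma hitTime_lt_iff {c : ℕ∞} : hitTime S ω < c ↔ ∃ t : ℕ, (t : ℕ∞) < c ∧ ω t ∈ S := by
  simp [hitTime, sInf_lt_iff, and_comm]

lemma hitTime_le_of_mem {t : ℕ} (h : ω t ∈ S) : hitTime S ω ≤ t :=
  sInf_le ⟨t, h, rfl⟩

lemma le_hitTime_iff {t : ℕ} : (t : ℕ∞) ≤ hitTime S ω ↔ ∀ s < t, ω s ∉ S := by
  rw [← not_lt, hitTime_lt_iff]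
  simp

lemma lt_hitTime_iff {t : ℕ} : (t : ℕ∞) < hitTime S ω ↔ ∀ s ≤ t, ω s ∉ S := by
  rw [← ENat.add_one_le_iff (ENat.natCast_ne_top t), ← Nat.cast_add_one, le_hitTime_iff]
  simp

lemma hitTime_eq_coe_iff {t : ℕ} : hitTime S ω = t ↔ ω t ∈ S ∧ ∀ s < t, ω s ∉ S := by
  constructor
  · intro h
    have hbefore := le_hitTime_iff.1 h.ge
    obtain ⟨u, hu, huS⟩ :=
      hitTime_lt_iff.1 (h.trans_lt (ENat.natCast_lt_natCast.2 t.lt_succ_self))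
    obtain rfl : u = t :=
      le_antisymm (Nat.lt_succ_iff.1 (by exact_mod_cast hu)) (not_lt.1 fun h => hbefore u h huS)
    exact ⟨huS, hbefore⟩
  · rintro ⟨ht, hbefore⟩
    exact le_antisymm (hitTime_le_of_mem ht) (le_hitTime_iff.2 hbefore)

lemma hitTime_lt_top_iff : hitTime S ω < ⊤ ↔ ∃ t, ω t ∈ S := by
  simp [hitTime_lt_iff]

end HitTime

namespace MarkovChain

variable {X : Type*}

section Paths

variable {A B : Set X}

def stayIn (A : Set X) (n : ℕ) : Set (ℕ → X) := {ω | ∀ t < n, ω t ∈ A}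

def firstEntry (A B : Set X) (t : ℕ) : Set (ℕ → X) := stayIn A t ∩ {ω | ω t ∈ B}

@[simp]
lemma stayIn_zero : stayIn A 0 = univ := by
  ext ω; simp [stayIn]

lemma stayIn_succ (n : ℕ) : stayIn A (n + 1) = stayIn A n ∩ {ω | ω n ∈ A} := by
  ext ω; exact Nat.forall_lt_succ_right

lemma antitone_stayIn : Antitone (stayIn (X := X) A) :=
  fun _ _ hmn _ hω t ht => hω t (ht.trans_le hmn)

lemma iInter_stayIn : ⋂ n, stayIn A n = {ω | ∀ t, ω t ∈ A} := by
  ext ω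
  simp only [stayIn, mem_iInter, mem_ofPred_eq]
  exact ⟨fun h t => h (t + 1) t t.lt_succ_self, fun h _ t _ => h t⟩

lemma pairwise_disjoint_firstEntry (hAB : Disjoint A B) :
    Pairwise (Function.onFun Disjoint (firstEntry A B)) := by
  refine (pairwise_disjoint_on _).2 fun s t hst => disjoint_left.2 ?_
  rintro ω ⟨-, hωs⟩ ⟨hω, -⟩
  exact hAB.notMem_of_mem_left (hω s hst) hωs

variable [MeasurableSpace X]

lemma measurableSet_comap_stayIn (hA : MeasurableSet A) (n : ℕ) :
    MeasurableSet[MeasurableSpace.comap (fun (ω : ℕ → X) (i : Fin n) => ω (i : ℕ))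
      inferInstance] (stayIn A n) := by
  refine ⟨univ.pi fun _ => A, MeasurableSet.univ_pi fun _ => hA, ?_⟩
  ext ω
  simp [stayIn, Fin.forall_iff]

lemma measurableSet_stayIn (hA : MeasurableSet A) (n : ℕ) : MeasurableSet (stayIn A n) :=
  (measurable_pi_lambda _ fun _ => measurable_pi_apply _).comap_le _
    (measurableSet_comap_stayIn hA n)

lemma measurableSet_firstEntry (hA : MeasurableSet A) (hB : MeasurableSet B) (t : ℕ) :
    MeasurableSet (firstEntry A B t) :=
  (measurableSet_stayIn hA t).inter (measurable_pi_apply t hB)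

end Paths

section Harmonic

variable [MeasurableSpace X] {κ : X → Measure X} {P : X → Measure (ℕ → X)} {A B : Set X}
  {f : X → ℝ≥0∞}

lemma lintegral_eval_zero (hP : IsMarkovChainLaw κ P) (hf : Measurable f) (x : X) :
    ∫⁻ ω, f (ω 0) ∂P x = f x := by
  have := hP.1 x
  have hmeas : MeasurableSet {ω : ℕ → X | f (ω 0) = f x} :=
    (hf.comp (measurable_pi_apply 0)) (measurableSet_singleton (f x))
  have hstart : ∀ᵐ ω ∂P x, f (ω 0) = f x := by
    refine (ae_iff_measure_eq hmeas.nullMeasurableSet).2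
      (le_antisymm (measure_mono (subset_univ _)) ?_)
    rw [measure_univ, ← hP.2.1 x]
    exact measure_mono fun ω (hω : ω 0 = x) => congrArg f hω
  rw [lintegral_congr_ae hstart, lintegral_const, measure_univ, mul_one]

lemma setLIntegral_stayIn_eval_succ (hP : IsMarkovChainLaw κ P) (hA : MeasurableSet A)
    (hf : Measurable f) (hharm : ∀ y ∈ A, f y = ∫⁻ z, f z ∂κ y) (x : X) (n : ℕ) :
    ∫⁻ ω in stayIn A (n + 1), f (ω (n + 1)) ∂P x = ∫⁻ ω in stayIn A (n + 1), f (ω n) ∂P x := by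
  rw [hP.2.2 x n _ (measurableSet_comap_stayIn hA (n + 1)) f hf]
  exact setLIntegral_congr_fun (measurableSet_stayIn hA _)
    fun ω hω => (hharm _ (hω n n.lt_succ_self)).symm

lemma setLIntegral_stayIn_eq_add (hP : IsMarkovChainLaw κ P) (hA : MeasurableSet A)
    (hB : MeasurableSet B) (hAB : Disjoint A B) (hf : Measurable f) (hfB : ∀ y ∈ B, f y = 1)
    (hf0 : ∀ y ∉ A ∪ B, f y = 0) (hharm : ∀ y ∈ A, f y = ∫⁻ z, f z ∂κ y) (x : X) (n : ℕ) :
    ∫⁻ ω in stayIn A n, f (ω n) ∂P x =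
      P x (firstEntry A B n) + ∫⁻ ω in stayIn A (n + 1), f (ω (n + 1)) ∂P x := by
  have hAn : MeasurableSet {ω : ℕ → X | ω n ∈ A} := measurable_pi_apply n hA
  have hBn : MeasurableSet {ω : ℕ → X | ω n ∈ B} := measurable_pi_apply n hB
  have hentry : ∫⁻ ω in firstEntry A B n, f (ω n) ∂P x = P x (firstEntry A B n) := by
    rw [setLIntegral_congr_fun (measurableSet_firstEntry hA hB n) fun ω hω => hfB _ hω.2,
      setLIntegral_one]
  have hexit : ∫⁻ ω in (stayIn A n \ {ω | ω n ∈ A}) \ {ω | ω n ∈ B}, f (ω n) ∂P x = 0 := by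
    rw [setLIntegral_congr_fun (((measurableSet_stayIn hA n).diff hAn).diff hBn)
      fun ω hω => hf0 _ (not_or.2 ⟨hω.1.2, hω.2⟩)]
    exact lintegral_zero
  have hrest : (stayIn A n \ {ω | ω n ∈ A}) ∩ {ω | ω n ∈ B} = firstEntry A B n := by
    ext ω
    simp only [firstEntry, mem_inter_iff, mem_sdiff, mem_ofPred_eq]
    exact ⟨fun h => ⟨h.1.1, h.2⟩, fun h => ⟨⟨h.1, hAB.notMem_of_mem_right h.2⟩, h.2⟩⟩
  rw [setLIntegral_stayIn_eval_succ hP hA hf hharm, stayIn_succ,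
    ← lintegral_inter_add_sdiff _ (stayIn A n) hAn,
    ← lintegral_inter_add_sdiff _ (stayIn A n \ _) hBn, hrest, hentry, hexit, add_zero, add_comm]

lemma eq_sum_firstEntry_add (hP : IsMarkovChainLaw κ P) (hA : MeasurableSet A)
    (hB : MeasurableSet B) (hAB : Disjoint A B) (hf : Measurable f) (hfB : ∀ y ∈ B, f y = 1)
    (hf0 : ∀ y ∉ A ∪ B, f y = 0) (hharm : ∀ y ∈ A, f y = ∫⁻ z, f z ∂κ y) (x : X) (n : ℕ) :
    f x = ∑ t ∈ Finset.range n, P x (firstEntry A B t) + ∫⁻ ω in stayIn A n, f (ω n) ∂P x := by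
  induction n with
  | zero => simp [lintegral_eval_zero hP hf]
  | succ n ih =>
    rw [ih, setLIntegral_stayIn_eq_add hP hA hB hAB hf hfB hf0 hharm, Finset.sum_range_succ,
      add_assoc]

open Filter in
theorem eq_measure_iUnion_firstEntry (hP : IsMarkovChainLaw κ P) (hA : MeasurableSet A)
    (hB : MeasurableSet B) (hAB : Disjoint A B) (hf : Measurable f) (hf1 : ∀ y, f y ≤ 1)
    (hfB : ∀ y ∈ B, f y = 1) (hf0 : ∀ y ∉ A ∪ B, f y = 0)
    (hharm : ∀ y ∈ A, f y = ∫⁻ z, f z ∂κ y) (x : X) (hx : P x {ω | ∃ t, ω t ∉ A} = 1) :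
    f x = P x (⋃ t, firstEntry A B t) := by
  have := hP.1 x
  have hentry : Tendsto (fun n => ∑ t ∈ Finset.range n, P x (firstEntry A B t)) atTop
      (𝓝 (P x (⋃ t, firstEntry A B t))) := by
    rw [measure_iUnion (pairwise_disjoint_firstEntry hAB) (measurableSet_firstEntry hA hB)]
    exact ENNReal.tendsto_nat_tsum _
  have hnever : P x (⋂ n, stayIn A n) = 0 := by
    rw [← prob_compl_eq_one_iff (MeasurableSet.iInter (measurableSet_stayIn hA)), ← hx,
      iInter_stayIn]
    congr 1
    ext ω
    simp
  have hstay : Tendsto (fun n => P x (stayIn A n)) atTop (𝓝 0) := by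
    rw [← hnever]
    exact tendsto_measure_iInter_atTop (fun n => (measurableSet_stayIn hA n).nullMeasurableSet)
      antitone_stayIn ⟨0, measure_ne_top _ _⟩
  have hrem : Tendsto (fun n => ∫⁻ ω in stayIn A n, f (ω n) ∂P x) atTop (𝓝 0) :=
    tendsto_of_tendsto_of_tendsto_of_le_of_le tendsto_const_nhds hstay (fun _ => bot_le)
      fun n => (lintegral_mono fun ω => hf1 _).trans_eq (setLIntegral_one _)
  have hlim := hentry.add hrem
  rw [add_zero] at hlim
  exact tendsto_nhds_unique
    (tendsto_const_nhds.congr fun n => eq_sum_firstEntry_add hP hA hB hAB hf hfB hf0 hharm x n) hlim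

end Harmonic

section HitTime

variable {O K : Set X} {ω : ℕ → X}

lemma mem_firstEntry_iff_hitTime (hOK : O ⊆ K) {t : ℕ} :
    ω ∈ firstEntry (K \ O) O t ↔ hitTime O ω = t ∧ (t : ℕ∞) < hitTime Kᶜ ω := by
  simp only [firstEntry, stayIn, hitTime_eq_coe_iff, lt_hitTime_iff, mem_inter_iff,
    mem_ofPred_eq, mem_sdiff, mem_compl_iff, not_not]
  constructor
  · rintro ⟨hbefore, ht⟩
    refine ⟨⟨ht, fun s hs => (hbefore s hs).2⟩, fun s hs => ?_⟩
    rcases hs.lt_or_eq with hs | rfl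
    exacts [(hbefore s hs).1, hOK ht]
  · rintro ⟨⟨ht, hO⟩, hK⟩
    exact ⟨fun s hs => ⟨hK s hs.le, hO s hs⟩, ht⟩

lemma setOf_hitTime_lt_eq_iUnion (hOK : O ⊆ K) :
    {ω | hitTime O ω < hitTime Kᶜ ω ∧ hitTime O ω < ⊤} = ⋃ t, firstEntry (K \ O) O t := by
  ext ω
  simp only [mem_ofPred_eq, mem_iUnion, mem_firstEntry_iff_hitTime hOK]
  constructor
  · rintro ⟨hlt, htop⟩
    obtain ⟨t, ht⟩ := ENat.ne_top_iff_exists.1 htop.ne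
    exact ⟨t, ht.symm, ht ▸ hlt⟩
  · rintro ⟨t, ht, hlt⟩
    rw [ht]
    exact ⟨hlt, ENat.natCast_lt_top t⟩

lemma setOf_min_hitTime_lt_top :
    {ω | min (hitTime O ω) (hitTime Kᶜ ω) < ⊤} = {ω | ∃ t, ω t ∉ K \ O} := by
  ext ω
  simp [hitTime_lt_top_iff, ← exists_or, imp_iff_not_or, or_comm]

end HitTime

end MarkovChain

open MarkovChain in
theorem stmt5_general {X : Type*} [MeasurableSpace X]
    (κ : Kernel X X)
    (O K : Set X) (hmO : MeasurableSet O) (hmK : MeasurableSet K) (hOK : O ⊂ K)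
    (P : X → Measure (ℕ → X)) (hP : IsMarkovChainLaw (fun x => κ x) P)
    (hfin : ∀ x, P x {ω | min (hitTime O ω) (hitTime Kᶜ ω) < ⊤} = 1)
    (ψ : X → ℝ≥0∞) (hψmeas : Measurable ψ) (hψ1 : ∀ x, ψ x ≤ 1)
    (hψO : ∀ x ∈ O, ψ x = 1) (hψK : ∀ x ∉ K, ψ x = 0)
    (hψharm : ∀ x ∈ K \ O, ψ x = ∫⁻ y in K, ψ y ∂(κ x)) :
    ∀ x, ψ x = P x {ω | hitTime O ω < hitTime Kᶜ ω ∧ hitTime O ω < ⊤} := by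
  intro x
  have hharm : ∀ y ∈ K \ O, ψ y = ∫⁻ z, ψ z ∂κ y := fun y hy =>
    (hψharm y hy).trans <| setLIntegral_eq_of_support_subset fun z hz =>
      by_contra fun hzK => hz (hψK z hzK)
  rw [setOf_hitTime_lt_eq_iUnion hOK.subset]
  refine eq_measure_iUnion_firstEntry hP (hmK.diff hmO) hmO disjoint_sdiff_left hψmeas hψ1 hψO
    (fun y hy => hψK y (sdiff_union_of_subset hOK.subset ▸ hy)) hharm x ?_
  rw [← setOf_min_hitTime_lt_top]
  exact hfin x

theorem stmt5 {X : Type*} [MeasurableSpace X] [StandardBorelSpace X]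
    (κ : Kernel X X) [IsMarkovKernel κ]
    (O K : Set X) (hmO : MeasurableSet O) (hmK : MeasurableSet K) (hOK : O ⊂ K)
    (P : X → Measure (ℕ → X)) (hP : IsMarkovChainLaw (fun x => κ x) P)
    (hfin : ∀ x, P x {ω | min (hitTime O ω) (hitTime Kᶜ ω) < ⊤} = 1)
    (ψ : X → ℝ≥0∞) (hψmeas : Measurable ψ) (hψ1 : ∀ x, ψ x ≤ 1)
    (hψO : ∀ x ∈ O, ψ x = 1) (hψK : ∀ x ∉ K, ψ x = 0)
    (hψharm : ∀ x ∈ K \ O, ψ x = ∫⁻ y in K, ψ y ∂(κ x)) :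
    ∀ x, ψ x = P x {ω | hitTime O ω < hitTime Kᶜ ω ∧ hitTime O ω < ⊤} :=
  stmt5_general κ O K hmO hmK hOK P hP hfin ψ hψmeas hψ1 hψO hψK hψharm
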